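/- Let p ∈ [1, ∞), α ∈ (0, 1), and let (X, ‖·‖_X) be a Banach space for which there is K ∈ (0, ∞) such that for every n ∈ ℕ and every h : {−1,1}^n → X, 2^{−n} Σ_{δ∈{−1,1}^n} ‖Σ_{j=1}^n δ_j (∂_j ⊗ I_X) h‖_{L_p(X)}^p ≤ K^p ‖(Δ_{[n]}^{α} ⊗ I_X) h‖_{L_p(X)}^p. Then X is K-convex: there exists K' ∈ (0, ∞) such that for every n ∈ ℕ and every h : {−1,1}^n → X, ‖(Rad ⊗ I_X) h‖_{L_2(X)} ≤ K' ‖h‖_{L_2(X)}, where (Rad ⊗ I_X) h(ε) := Σ_{j=1}^n ε_j ĥ({j}) is the (vector-valued) Rademacher projection. -/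

import Mathlib

/-!
Test the one-sided Riesz inequality on `g = Δ^{-α} T_ρ f`, where `T_ρ` is the noise operator and
`ρ = 1/(2m)` with `m = ⌈p⌉`. Averaging `Σ_j δ_j ∂_j g` over the translates `ε ↦ δε` returns
`2 Rad g = 2ρ Rad f` pointwise, so by Jensen `‖Rad f‖_p ≤ m K ‖Δ^α g‖_p = m K ‖T_ρ f - f̂(∅)‖_p`.
Bonami's hypercontractivity `‖T_ρ u‖_{2m} ≤ ‖u‖₂` bounds this by `2 m K ‖f‖₂`; it is proved for
scalar `u` by switching the noise on one coordinate at a time, using the two-point inequality in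
the new coordinate and Minkowski's inequality in `L₂` of the coordinates already treated, and it
passes to `X` because `‖T_ρ f‖ ≤ T_ρ ‖f‖`. Finally, `Rad f` is an eigenfunction of `T_{1/4}`, so
hypercontractivity gives `‖Rad f‖₄ ≤ 4 ‖Rad f‖₂`, and Hölder turns this into Kahane's inequality
`‖Rad f‖₂ ≤ 16 ‖Rad f‖₁ ≤ 16 ‖Rad f‖_p`.
-/

open Finset

/-- The `L_p(X)` norm (normalized counting measure) of an `X`-valued function on the
discrete hypercube `{-1,1}^n` (coordinates encoded by `Bool`). -/
noncomputable def lpXnorm {n : ℕ} (p : ℝ) {X : Type*} [NormedAddCommGroup X]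
    (h : (Fin n → Bool) → X) : ℝ :=
  ((∑ ε : Fin n → Bool, ‖h ε‖ ^ p) / 2 ^ n) ^ (1 / p)

/-- The Walsh function `W_A(ε) = Π_{j ∈ A} ε_j`. -/
def walsh {n : ℕ} (A : Finset (Fin n)) (ε : Fin n → Bool) : ℝ :=
  ∏ j ∈ A, (if ε j then (1 : ℝ) else -1)

/-- The `X`-valued Fourier–Walsh coefficient `ĥ(A) = 2^{-n} Σ_ε W_A(ε) h(ε)`. -/
noncomputable def fourierX {n : ℕ} {X : Type*} [NormedAddCommGroup X] [NormedSpace ℝ X]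
    (h : (Fin n → Bool) → X) (A : Finset (Fin n)) : X :=
  ((2 : ℝ) ^ n)⁻¹ • ∑ ε : Fin n → Bool, walsh A ε • h ε

/-- The vector-valued hypercube partial derivative `(∂_j ⊗ I_X) h`. -/
noncomputable def dflipX {n : ℕ} {X : Type*} [NormedAddCommGroup X] (j : Fin n)
    (h : (Fin n → Bool) → X) : (Fin n → Bool) → X :=
  fun ε => h ε - h (Function.update ε j (!ε j))

/-- The vector-valued fractional Laplacian `(Δ_{[n]}^α ⊗ I_X) h = Σ_{A ≠ ∅} |A|^α W_A ĥ(A)`. -/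
noncomputable def deltaPowX {n : ℕ} {X : Type*} [NormedAddCommGroup X] [NormedSpace ℝ X]
    (α : ℝ) (h : (Fin n → Bool) → X) : (Fin n → Bool) → X :=
  fun ε => ∑ A : Finset (Fin n),
    if A.Nonempty then (((A.card : ℝ) ^ α) * walsh A ε) • fourierX h A else 0

open Function

section Cube

variable {n : ℕ}

def boolSign (b : Bool) : ℝ := if b then 1 else -1

@[simp] lemma boolSign_true : boolSign true = 1 := rfl

@[simp] lemma boolSign_false : boolSign false = -1 := rfl

lemma boolSign_not (b : Bool) : boolSign (!b) = -boolSign b := by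
  cases b <;> simp

lemma boolSign_beq (a b : Bool) : boolSign (a == b) = boolSign a * boolSign b := by
  cases a <;> cases b <;> norm_num

def flipCoord (j : Fin n) (ε : Fin n → Bool) : Fin n → Bool := update ε j (!ε j)

lemma flipCoord_involutive (j : Fin n) : Involutive (flipCoord j) := fun ε => by
  simp [flipCoord]

lemma sum_comp_flipCoord {M : Type*} [AddCommMonoid M] (j : Fin n) (F : (Fin n → Bool) → M) :
    ∑ ε, F (flipCoord j ε) = ∑ ε, F ε :=
  Equiv.sum_comp ((flipCoord_involutive j).toPerm _) F

lemma sum_sum_update {M : Type*} [AddCommMonoid M] (j : Fin n) (G : (Fin n → Bool) → M) :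
    ∑ δ, ∑ b, G (update δ j b) = 2 • ∑ δ, G δ := by
  have pair : ∀ δ : Fin n → Bool, ∑ b, G (update δ j b) = G δ + G (flipCoord j δ) := by
    intro δ
    rw [Fintype.sum_bool, flipCoord]
    cases h : δ j
    · rw [← h, update_eq_self, h, Bool.not_false, add_comm]
    · rw [← h, update_eq_self, h, Bool.not_true]
  simp_rw [pair, sum_add_distrib, sum_comp_flipCoord, two_nsmul]

def cubeMul (δ η : Fin n → Bool) : Fin n → Bool := fun j => δ j == η j

lemma cubeMul_comm (δ η : Fin n → Bool) : cubeMul δ η = cubeMul η δ :=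
  funext fun _ => Bool.beq_comm

lemma cubeMul_cubeMul_right (δ η : Fin n → Bool) : cubeMul (cubeMul δ η) η = δ :=
  funext fun j => by simp only [cubeMul]; cases δ j <;> cases η j <;> rfl

lemma sum_comp_cubeMul {M : Type*} [AddCommMonoid M] (η : Fin n → Bool)
    (F : (Fin n → Bool) → M) : ∑ δ, F (cubeMul δ η) = ∑ δ, F δ :=
  Equiv.sum_comp (Involutive.toPerm (cubeMul · η) fun δ => cubeMul_cubeMul_right δ η) F

lemma walsh_eq_prod_univ (A : Finset (Fin n)) (ε : Fin n → Bool) :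
    walsh A ε = ∏ j, if j ∈ A then boolSign (ε j) else 1 :=
  (Fintype.prod_ite_mem A _).symm

lemma walsh_empty (ε : Fin n → Bool) : walsh ∅ ε = 1 := prod_empty

@[simp] lemma walsh_singleton (j : Fin n) (ε : Fin n → Bool) : walsh {j} ε = boolSign (ε j) :=
  prod_singleton _ _

lemma sum_walsh_mul_walsh (A B : Finset (Fin n)) :
    ∑ ε, walsh A ε * walsh B ε = if A = B then 2 ^ n else 0 := by
  have coord : ∀ j, ∑ b : Bool, (if j ∈ A then boolSign b else 1) *
      (if j ∈ B then boolSign b else 1) = if (j ∈ A ↔ j ∈ B) then 2 else 0 := by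
    intro j
    by_cases hA : j ∈ A <;> by_cases hB : j ∈ B <;> norm_num [hA, hB]
  simp_rw [walsh_eq_prod_univ, ← prod_mul_distrib]
  rw [← Fintype.prod_sum (fun j b => (if j ∈ A then boolSign b else 1) *
      (if j ∈ B then boolSign b else 1)), prod_congr rfl fun j _ => coord j, Fintype.prod_ite_zero,
    prod_const, card_univ, Fintype.card_fin]
  simp only [← Finset.ext_iff]

lemma card_cube : Fintype.card (Fin n → Bool) = 2 ^ n := by simp

lemma sum_const_inv_two_pow : ∑ _ε : Fin n → Bool, ((2 : ℝ) ^ n)⁻¹ = 1 := by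
  rw [sum_const, card_univ, card_cube, nsmul_eq_mul, Nat.cast_pow, Nat.cast_two,
    mul_inv_cancel₀ (by positivity)]

end Cube

section LpNorm

variable {n : ℕ} {X : Type*} [NormedAddCommGroup X]

lemma lpXnorm_nonneg (p : ℝ) (f : (Fin n → Bool) → X) : 0 ≤ lpXnorm p f := by
  unfold lpXnorm; positivity

lemma lpXnorm_rpow {p : ℝ} (hp : 0 < p) (f : (Fin n → Bool) → X) :
    lpXnorm p f ^ p = (∑ ε, ‖f ε‖ ^ p) / 2 ^ n := by
  rw [lpXnorm, ← Real.rpow_mul (by positivity), one_div_mul_cancel hp.ne', Real.rpow_one]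

lemma lpXnorm_natCast_pow {k : ℕ} (hk : k ≠ 0) (f : (Fin n → Bool) → X) :
    lpXnorm k f ^ k = (∑ ε, ‖f ε‖ ^ k) / 2 ^ n := by
  simpa only [Real.rpow_natCast] using lpXnorm_rpow (Nat.cast_pos.2 (Nat.pos_of_ne_zero hk)) f

lemma lpXnorm_two_sq (f : (Fin n → Bool) → X) : lpXnorm 2 f ^ 2 = (∑ ε, ‖f ε‖ ^ 2) / 2 ^ n := by
  simpa using lpXnorm_natCast_pow two_ne_zero f

lemma lpXnorm_le_of_rpow_le {p c : ℝ} (hp : 0 < p) (hc : 0 ≤ c) {f : (Fin n → Bool) → X}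
    (h : lpXnorm p f ^ p ≤ c ^ p) : lpXnorm p f ≤ c :=
  (Real.rpow_le_rpow_iff (lpXnorm_nonneg p f) hc hp).1 h

lemma lpXnorm_mono {p : ℝ} (hp : 0 ≤ p) {Y : Type*} [NormedAddCommGroup Y]
    {f : (Fin n → Bool) → X} {g : (Fin n → Bool) → Y} (hfg : ∀ ε, ‖f ε‖ ≤ ‖g ε‖) :
    lpXnorm p f ≤ lpXnorm p g := by
  unfold lpXnorm
  gcongr with ε
  exact hfg ε

lemma lpXnorm_norm (p : ℝ) (f : (Fin n → Bool) → X) :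
    lpXnorm p (fun ε => ‖f ε‖) = lpXnorm p f := by
  simp only [lpXnorm, norm_norm]

lemma lpXnorm_const {p : ℝ} (hp : 0 < p) (x : X) :
    lpXnorm p (fun _ : Fin n → Bool => x) = ‖x‖ := by
  rw [lpXnorm, sum_const, card_univ, card_cube, nsmul_eq_mul, Nat.cast_pow, Nat.cast_two,
    mul_div_cancel_left₀ _ (by positivity),
    ← Real.rpow_mul (norm_nonneg x), mul_one_div_cancel hp.ne', Real.rpow_one]

lemma lpXnorm_add_le {p : ℝ} (hp : 1 ≤ p) (f g : (Fin n → Bool) → X) :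
    lpXnorm p (f + g) ≤ lpXnorm p f + lpXnorm p g := by
  have hp0 : 0 < p := by positivity
  simp only [lpXnorm, Real.div_rpow (sum_nonneg fun _ _ => Real.rpow_nonneg (norm_nonneg _) _)
    (by positivity : (0 : ℝ) ≤ 2 ^ n), ← add_div]
  gcongr
  calc (∑ ε, ‖(f + g) ε‖ ^ p) ^ (1 / p) ≤ (∑ ε, (‖f ε‖ + ‖g ε‖) ^ p) ^ (1 / p) := by
        gcongr with ε; exact norm_add_le _ _
    _ ≤ _ := Real.Lp_add_le_of_nonneg univ hp (fun _ _ => norm_nonneg _) (fun _ _ => norm_nonneg _)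

lemma lpXnorm_le_lpXnorm {q r : ℝ} (hq : 0 < q) (hqr : q ≤ r) (f : (Fin n → Bool) → X) :
    lpXnorm q f ≤ lpXnorm r f := by
  have hr : 0 < r := hq.trans_le hqr
  refine (Real.rpow_le_rpow_iff (lpXnorm_nonneg q f) (lpXnorm_nonneg r f) hr).1 ?_
  have power_mean := Real.rpow_arith_mean_le_arith_mean_rpow (univ : Finset (Fin n → Bool))
    (fun _ => ((2 : ℝ) ^ n)⁻¹) (fun ε => ‖f ε‖ ^ q) (fun _ _ => by positivity) sum_const_inv_two_pow
    (fun _ _ => by positivity) ((one_le_div hq).2 hqr)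
  rw [← mul_sum, ← mul_sum] at power_mean
  simp only [← Real.rpow_mul (norm_nonneg _), mul_div_cancel₀ _ hq.ne'] at power_mean
  rw [lpXnorm_rpow hr, lpXnorm, ← Real.rpow_mul (by positivity), one_div_mul_eq_div]
  simpa only [div_eq_inv_mul] using power_mean

lemma lpXnorm_two_pow_three_le (f : (Fin n → Bool) → X) :
    lpXnorm 2 f ^ 3 ≤ lpXnorm 1 f * lpXnorm 4 f ^ 2 := by
  set S : ℕ → ℝ := fun k => ∑ ε, ‖f ε‖ ^ k
  have hS0 : ∀ k, 0 ≤ S k := fun k => sum_nonneg fun _ _ => by positivity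
  have cauchySchwarz : ∀ k, S (k + 1) ^ 2 ≤ S k * S (k + 2) := fun k =>
    sum_sq_le_sum_mul_sum_of_sq_le_mul univ (fun _ _ => by positivity)
      (fun _ _ => by positivity) (fun _ _ => le_of_eq (by ring))
  have moments : S 2 ^ 3 ≤ S 1 ^ 2 * S 4 := by
    rcases (hS0 2).eq_or_lt with h0 | hpos
    · rw [← h0, zero_pow three_ne_zero]
      exact mul_nonneg (sq_nonneg _) (hS0 4)
    refine le_of_mul_le_mul_right ?_ hpos
    calc S 2 ^ 3 * S 2 = (S 2 ^ 2) ^ 2 := by ring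
      _ ≤ (S 1 * S 3) ^ 2 := by gcongr; exact cauchySchwarz 1
      _ = S 1 ^ 2 * S 3 ^ 2 := by ring
      _ ≤ S 1 ^ 2 * (S 2 * S 4) := by gcongr; exact cauchySchwarz 2
      _ = S 1 ^ 2 * S 4 * S 2 := by ring
  have norm_pow : ∀ k : ℕ, k ≠ 0 → lpXnorm k f ^ k = S k / 2 ^ n := fun k hk =>
    lpXnorm_natCast_pow hk f
  have h1 := norm_pow 1 one_ne_zero
  have h2 := norm_pow 2 two_ne_zero
  have h4 := norm_pow 4 four_ne_zero
  simp only [Nat.cast_one, Nat.cast_ofNat, pow_one] at h1 h2 h4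
  have := lpXnorm_nonneg 1 f
  have := lpXnorm_nonneg 2 f
  have := lpXnorm_nonneg 4 f
  refine (pow_le_pow_iff_left₀ (by positivity) (by positivity) two_ne_zero).1 ?_
  calc (lpXnorm 2 f ^ 3) ^ 2 = (lpXnorm 2 f ^ 2) ^ 3 := by ring
    _ = S 2 ^ 3 / (2 ^ n) ^ 3 := by rw [h2, div_pow]
    _ ≤ S 1 ^ 2 * S 4 / (2 ^ n) ^ 3 := by gcongr
    _ = (lpXnorm 1 f * lpXnorm 4 f ^ 2) ^ 2 := by
      rw [mul_pow, ← pow_mul (lpXnorm 4 f) 2 2, h1, h4]; field_simp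

variable [NormedSpace ℝ X]

lemma lpXnorm_smul {p : ℝ} (hp : 0 < p) (c : ℝ) (f : (Fin n → Bool) → X) :
    lpXnorm p (c • f) = |c| * lpXnorm p f := by
  simp only [lpXnorm, Pi.smul_apply, norm_smul, Real.norm_eq_abs,
    Real.mul_rpow (abs_nonneg c) (norm_nonneg _), ← mul_sum, mul_div_assoc]
  rw [Real.mul_rpow (by positivity) (by positivity), ← Real.rpow_mul (abs_nonneg c),
    mul_one_div_cancel hp.ne', Real.rpow_one]

lemma norm_average_rpow_le {p : ℝ} (hp : 1 ≤ p) (G : (Fin n → Bool) → X) :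
    ‖((2 : ℝ) ^ n)⁻¹ • ∑ δ, G δ‖ ^ p ≤ ((2 : ℝ) ^ n)⁻¹ * ∑ δ, ‖G δ‖ ^ p := by
  have triangle : ‖((2 : ℝ) ^ n)⁻¹ • ∑ δ, G δ‖ ≤ ∑ δ, ((2 : ℝ) ^ n)⁻¹ * ‖G δ‖ := by
    rw [norm_smul, Real.norm_of_nonneg (by positivity), ← mul_sum]
    gcongr
    exact norm_sum_le _ _
  calc ‖((2 : ℝ) ^ n)⁻¹ • ∑ δ, G δ‖ ^ p ≤ (∑ δ, ((2 : ℝ) ^ n)⁻¹ * ‖G δ‖) ^ p := by gcongr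
    _ ≤ ∑ δ, ((2 : ℝ) ^ n)⁻¹ * ‖G δ‖ ^ p :=
      Real.rpow_arith_mean_le_arith_mean_rpow univ _ _ (fun _ _ => by positivity)
        sum_const_inv_two_pow (fun _ _ => norm_nonneg _) hp
    _ = ((2 : ℝ) ^ n)⁻¹ * ∑ δ, ‖G δ‖ ^ p := (mul_sum _ _ _).symm

lemma norm_fourierX_empty_le (f : (Fin n → Bool) → X) :
    ‖fourierX f ∅‖ ≤ lpXnorm 1 f := by
  have h := norm_average_rpow_le le_rfl f
  simp only [Real.rpow_one] at h
  simpa [fourierX, walsh_empty, lpXnorm, div_eq_inv_mul] using h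

end LpNorm

section Multipliers

variable {n : ℕ} {X : Type*} [NormedAddCommGroup X] [NormedSpace ℝ X]

lemma fourierX_sum_walsh_smul (c : Finset (Fin n) → ℝ) (v : Finset (Fin n) → X)
    (B : Finset (Fin n)) :
    fourierX (fun ε => ∑ A, (c A * walsh A ε) • v A) B = c B • v B := by
  have orthogonality : ∀ A, ∑ ε, walsh B ε * (c A * walsh A ε) =
      if A = B then (2 : ℝ) ^ n * c A else 0 := by
    intro A
    simp_rw [mul_left_comm (walsh B _), ← mul_sum, mul_comm (walsh B _), sum_walsh_mul_walsh]
    split_ifs <;> ring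
  have swap : ∑ ε, walsh B ε • ∑ A, (c A * walsh A ε) • v A =
      ∑ A, (∑ ε, walsh B ε * (c A * walsh A ε)) • v A := by
    simp only [smul_sum, smul_smul, sum_smul]
    exact sum_comm
  rw [fourierX, swap]
  simp only [orthogonality, ite_smul, zero_smul, Fintype.sum_ite_eq', smul_smul,
    inv_mul_cancel_left₀ (pow_ne_zero n two_ne_zero : (2 : ℝ) ^ n ≠ 0)]

noncomputable def fourierMultiplier (μ : Finset (Fin n) → ℝ) (f : (Fin n → Bool) → X) :
    (Fin n → Bool) → X :=
  fun ε => ∑ A, (μ A * walsh A ε) • fourierX f A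

lemma fourierX_fourierMultiplier (μ : Finset (Fin n) → ℝ) (f : (Fin n → Bool) → X)
    (B : Finset (Fin n)) : fourierX (fourierMultiplier μ f) B = μ B • fourierX f B :=
  fourierX_sum_walsh_smul μ (fourierX f) B

lemma fourierMultiplier_fourierMultiplier (μ ν : Finset (Fin n) → ℝ) (f : (Fin n → Bool) → X) :
    fourierMultiplier μ (fourierMultiplier ν f) = fourierMultiplier (μ * ν) f := by
  funext ε
  simp only [fourierMultiplier, fourierX_fourierMultiplier, smul_smul, Pi.mul_apply]
  exact sum_congr rfl fun A _ => by ring_nf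

lemma fourierMultiplier_const_mul (c : ℝ) (μ : Finset (Fin n) → ℝ) (f : (Fin n → Bool) → X) :
    fourierMultiplier (fun A => c * μ A) f = c • fourierMultiplier μ f := by
  funext ε
  simp only [fourierMultiplier, Pi.smul_apply, smul_sum, smul_smul, mul_assoc]

noncomputable def rademacher (f : (Fin n → Bool) → X) : (Fin n → Bool) → X :=
  fun ε => ∑ j, boolSign (ε j) • fourierX f {j}

lemma rademacher_eq_fourierMultiplier (f : (Fin n → Bool) → X) :
    rademacher f = fourierMultiplier (fun A => if A.card = 1 then 1 else 0) f := by
  funext ε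
  simp only [fourierMultiplier, ite_mul, one_mul, zero_mul, ite_smul, zero_smul]
  rw [← sum_filter, ← powerset_univ, ← powersetCard_eq_filter, powersetCard_one, sum_map]
  simp [rademacher]

lemma deltaPowX_eq_fourierMultiplier (α : ℝ) (f : (Fin n → Bool) → X) :
    deltaPowX α f = fourierMultiplier (fun A => if A.Nonempty then (A.card : ℝ) ^ α else 0) f := by
  funext ε
  refine sum_congr rfl fun A _ => ?_
  by_cases h : A.Nonempty <;> simp [h]

end Multipliers

section Noise

variable {n : ℕ} {X : Type*} [NormedAddCommGroup X] [NormedSpace ℝ X]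

def noiseKernel (ρ : ℝ) (ε δ : Fin n → Bool) : ℝ :=
  ∏ j, (1 + ρ * (boolSign (ε j) * boolSign (δ j)))

noncomputable def noise (ρ : ℝ) (f : (Fin n → Bool) → X) : (Fin n → Bool) → X :=
  fun ε => ((2 : ℝ) ^ n)⁻¹ • ∑ δ, noiseKernel ρ ε δ • f δ

lemma noiseKernel_nonneg {ρ : ℝ} (hρ : |ρ| ≤ 1) (ε δ : Fin n → Bool) : 0 ≤ noiseKernel ρ ε δ := by
  refine prod_nonneg fun j _ => ?_
  have := abs_le.1 hρ
  cases ε j <;> cases δ j <;> norm_num <;> linarith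

lemma noiseKernel_eq_sum_walsh (ρ : ℝ) (ε δ : Fin n → Bool) :
    noiseKernel ρ ε δ = ∑ A, ρ ^ A.card * (walsh A ε * walsh A δ) := by
  rw [noiseKernel, prod_one_add, powerset_univ]
  simp only [prod_mul_distrib, prod_const]
  rfl

lemma noise_eq_fourierMultiplier (ρ : ℝ) (f : (Fin n → Bool) → X) :
    noise ρ f = fourierMultiplier (fun A => ρ ^ A.card) f := by
  funext ε
  simp only [noise, fourierMultiplier, fourierX, noiseKernel_eq_sum_walsh, sum_smul, smul_sum,
    smul_smul]
  rw [sum_comm]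
  exact sum_congr rfl fun A _ => sum_congr rfl fun δ _ => by ring_nf

lemma noise_rademacher (ρ : ℝ) (f : (Fin n → Bool) → X) :
    noise ρ (rademacher f) = ρ • rademacher f := by
  rw [noise_eq_fourierMultiplier, rademacher_eq_fourierMultiplier,
    fourierMultiplier_fourierMultiplier, ← fourierMultiplier_const_mul]
  congr 1
  funext A
  by_cases h : A.card = 1 <;> simp [h]

lemma norm_noise_le {ρ : ℝ} (hρ : |ρ| ≤ 1) (f : (Fin n → Bool) → X) (ε : Fin n → Bool) :
    ‖noise ρ f ε‖ ≤ noise ρ (fun δ => ‖f δ‖) ε := by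
  rw [noise, noise, norm_smul, smul_eq_mul, Real.norm_of_nonneg (by positivity)]
  gcongr
  refine (norm_sum_le _ _).trans_eq (sum_congr rfl fun δ _ => ?_)
  rw [norm_smul, Real.norm_of_nonneg (noiseKernel_nonneg hρ ε δ), smul_eq_mul]

end Noise

section TwoPoint

lemma sum_range_two_mul_add_one_eq_sum_even {M : Type*} [AddCommMonoid M] (m : ℕ) (g : ℕ → M)
    (hg : ∀ k, Odd k → g k = 0) :
    ∑ k ∈ range (2 * m + 1), g k = ∑ i ∈ range (m + 1), g (2 * i) := by
  induction m with
  | zero => simp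
  | succ m ih =>
    rw [show 2 * (m + 1) + 1 = 2 * m + 1 + 1 + 1 by ring, sum_range_succ, sum_range_succ, ih,
      hg _ (odd_two_mul_add_one m), add_zero, sum_range_succ (fun i => g (2 * i)) (m + 1),
      mul_add_one]

lemma choose_mul_inv_pow_le (m i : ℕ) (hi : i ≤ m) :
    ((2 * m).choose (2 * i) : ℝ) * (2 * m : ℝ)⁻¹ ^ (2 * i) ≤ m.choose i := by
  have hchoose : ((2 * m).choose (2 * i) : ℝ) ≤ (2 * m : ℝ) ^ (2 * i) := by
    exact_mod_cast Nat.choose_le_pow (2 * m) (2 * i)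
  calc ((2 * m).choose (2 * i) : ℝ) * (2 * m : ℝ)⁻¹ ^ (2 * i)
      ≤ (2 * m : ℝ) ^ (2 * i) * (2 * m : ℝ)⁻¹ ^ (2 * i) := by gcongr
    _ = ((2 * m : ℝ) * (2 * m : ℝ)⁻¹) ^ (2 * i) := (mul_pow _ _ _).symm
    _ ≤ 1 := pow_le_one₀ (by positivity) mul_inv_le_one
    _ ≤ m.choose i := by exact_mod_cast Nat.choose_pos hi

lemma two_point_inequality (m : ℕ) (a c : ℝ) :
    (a + (2 * m : ℝ)⁻¹ * c) ^ (2 * m) + (a - (2 * m : ℝ)⁻¹ * c) ^ (2 * m) ≤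
      2 * (a ^ 2 + c ^ 2) ^ m := by
  set σ : ℝ := (2 * m : ℝ)⁻¹
  have expand : (a + σ * c) ^ (2 * m) + (a - σ * c) ^ (2 * m) =
      2 * ∑ i ∈ range (m + 1),
        (σ * c) ^ (2 * i) * a ^ (2 * m - 2 * i) * (2 * m).choose (2 * i) := by
    rw [add_comm a, sub_eq_neg_add, add_pow, add_pow, ← sum_add_distrib,
      sum_range_two_mul_add_one_eq_sum_even, mul_sum]
    · exact sum_congr rfl fun i _ => by rw [(even_two_mul i).neg_pow]; ring
    · intro k hk
      rw [hk.neg_pow]; ring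
  rw [expand, add_comm (a ^ 2), add_pow]
  gcongr 2 * ?_
  refine sum_le_sum fun i hi => ?_
  have hi : i ≤ m := Nat.lt_succ_iff.1 (mem_range.1 hi)
  calc (σ * c) ^ (2 * i) * a ^ (2 * m - 2 * i) * ((2 * m).choose (2 * i) : ℝ)
      = ((2 * m).choose (2 * i) * σ ^ (2 * i)) * ((c ^ 2) ^ i * (a ^ 2) ^ (m - i)) := by
        rw [mul_pow, ← pow_mul, ← pow_mul, show 2 * m - 2 * i = 2 * (m - i) by omega]; ring
    _ ≤ m.choose i * ((c ^ 2) ^ i * (a ^ 2) ^ (m - i)) := by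
        gcongr; exact choose_mul_inv_pow_le m i hi
    _ = (c ^ 2) ^ i * (a ^ 2) ^ (m - i) * m.choose i := by ring

end TwoPoint

section Hypercontractivity

variable {n : ℕ}

lemma sum_eq_inv_two_mul_sum_sum_update (j : Fin n) (G : (Fin n → Bool) → ℝ) :
    ∑ δ, G δ = 2⁻¹ * ∑ δ, ∑ b, G (update δ j b) := by
  rw [sum_sum_update, nsmul_eq_mul, Nat.cast_ofNat, inv_mul_cancel_left₀ two_ne_zero]

lemma piecewise_update_of_notMem {s : Finset (Fin n)} {j : Fin n} (hj : j ∉ s)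
    (δ ε : Fin n → Bool) (b : Bool) : s.piecewise (update δ j b) ε = s.piecewise δ ε :=
  s.piecewise_congr (fun _ hi => update_of_ne (ne_of_mem_of_not_mem hi hj) _ _) fun _ _ => rfl

lemma inv_two_mul_le_one (m : ℕ) : (2 * m : ℝ)⁻¹ ≤ 1 := by
  rcases Nat.eq_zero_or_pos m with rfl | hm
  · simp
  · exact inv_le_one_of_one_le₀ (by norm_cast; omega)

noncomputable def partialNoise (σ : ℝ) (s : Finset (Fin n)) (u : (Fin n → Bool) → ℝ)
    (ε : Fin n → Bool) : ℝ :=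
  ((2 : ℝ) ^ n)⁻¹ *
    ∑ δ, (∏ i ∈ s, (1 + σ * (boolSign (ε i) * boolSign (δ i)))) * u (s.piecewise δ ε)

noncomputable def partialL2 (s : Finset (Fin n)) (u : (Fin n → Bool) → ℝ)
    (ε : Fin n → Bool) : ℝ :=
  lpXnorm 2 fun δ => u (s.piecewise δ ε)

noncomputable def coordNoise (σ : ℝ) (j : Fin n) (u : (Fin n → Bool) → ℝ)
    (ε : Fin n → Bool) : ℝ :=
  2⁻¹ * ∑ b, (1 + σ * (boolSign (ε j) * boolSign b)) * u (update ε j b)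

lemma partialNoise_empty (σ : ℝ) (u : (Fin n → Bool) → ℝ) (ε : Fin n → Bool) :
    partialNoise σ ∅ u ε = u ε := by
  simp only [partialNoise, prod_empty, one_mul, piecewise_empty, sum_const, card_univ, card_cube,
    nsmul_eq_mul, Nat.cast_pow, Nat.cast_ofNat]
  exact inv_mul_cancel_left₀ (by positivity) _

lemma partialNoise_univ (σ : ℝ) (u : (Fin n → Bool) → ℝ) (ε : Fin n → Bool) :
    partialNoise σ univ u ε = noise σ u ε := by
  simp only [partialNoise, piecewise_univ, noise, smul_eq_mul]
  rfl

lemma partialNoise_insert (σ : ℝ) {s : Finset (Fin n)} {j : Fin n} (hj : j ∉ s)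
    (u : (Fin n → Bool) → ℝ) (ε : Fin n → Bool) :
    partialNoise σ (insert j s) u ε = partialNoise σ s (coordNoise σ j u) ε := by
  have kernel_update : ∀ δ b, ∏ i ∈ s, (1 + σ * (boolSign (ε i) * boolSign (update δ j b i))) =
      ∏ i ∈ s, (1 + σ * (boolSign (ε i) * boolSign (δ i))) := fun δ b =>
    prod_congr rfl fun i hi => by rw [update_of_ne (ne_of_mem_of_not_mem hi hj)]
  have coordNoise_piecewise : ∀ δ, coordNoise σ j u (s.piecewise δ ε) =
      2⁻¹ * ∑ b, (1 + σ * (boolSign (ε j) * boolSign b)) * u (s.piecewise δ (update ε j b)) := by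
    intro δ
    simp only [coordNoise, piecewise_eq_of_notMem _ _ _ hj, update_piecewise_of_notMem _ _ _ hj]
  rw [partialNoise, partialNoise, sum_eq_inv_two_mul_sum_sum_update j]
  simp only [prod_insert hj, piecewise_insert, update_piecewise_of_notMem _ _ _ hj,
    piecewise_update_of_notMem hj, update_self, coordNoise_piecewise, kernel_update, mul_sum]
  exact sum_congr rfl fun δ _ => sum_congr rfl fun b _ => by ring

lemma partialL2_empty (u : (Fin n → Bool) → ℝ) (ε : Fin n → Bool) :
    partialL2 ∅ u ε = |u ε| := by
  simp only [partialL2, piecewise_empty, lpXnorm_const two_pos, Real.norm_eq_abs]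

lemma partialL2_univ (u : (Fin n → Bool) → ℝ) (ε : Fin n → Bool) :
    partialL2 univ u ε = lpXnorm 2 u := by
  simp only [partialL2, piecewise_univ]

lemma partialL2_insert_sq {s : Finset (Fin n)} {j : Fin n} (hj : j ∉ s)
    (u : (Fin n → Bool) → ℝ) (ε : Fin n → Bool) :
    partialL2 (insert j s) u ε ^ 2 = 2⁻¹ * ∑ b, partialL2 s u (update ε j b) ^ 2 := by
  simp only [partialL2, lpXnorm_two_sq]
  rw [sum_eq_inv_two_mul_sum_sum_update j]
  simp only [piecewise_insert, update_piecewise_of_notMem _ _ _ hj, piecewise_update_of_notMem hj,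
    update_self]
  rw [mul_div_assoc, sum_comm, sum_div]

lemma partialL2_coordNoise_le {σ : ℝ} (hσ0 : 0 ≤ σ) (hσ1 : σ ≤ 1) {s : Finset (Fin n)}
    {j : Fin n} (hj : j ∉ s) (u : (Fin n → Bool) → ℝ) (ε : Fin n → Bool) :
    partialL2 s (coordNoise σ j u) ε ≤ coordNoise σ j (partialL2 s u) ε := by
  set w : Bool → ℝ := fun b => 2⁻¹ * (1 + σ * (boolSign (ε j) * boolSign b))
  have hw : ∀ b, 0 ≤ w b := fun b => by
    simp only [w]; cases ε j <;> cases b <;> norm_num <;> linarith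
  set g : Bool → (Fin n → Bool) → ℝ := fun b δ => u (s.piecewise δ (update ε j b))
  have split :
      (fun δ => coordNoise σ j u (s.piecewise δ ε)) = w true • g true + w false • g false := by
    funext δ
    simp only [coordNoise, piecewise_eq_of_notMem _ _ _ hj, update_piecewise_of_notMem _ _ _ hj,
      Fintype.sum_bool, Pi.add_apply, Pi.smul_apply, smul_eq_mul, w, g]
    ring
  calc partialL2 s (coordNoise σ j u) ε
        ≤ lpXnorm 2 (w true • g true) + lpXnorm 2 (w false • g false) := by
        rw [partialL2, split]; exact lpXnorm_add_le one_le_two _ _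
    _ = coordNoise σ j (partialL2 s u) ε := by
        rw [lpXnorm_smul two_pos, lpXnorm_smul two_pos, abs_of_nonneg (hw true),
          abs_of_nonneg (hw false)]
        simp only [coordNoise, Fintype.sum_bool, partialL2, w, g]
        ring

lemma sum_coordNoise_pow_le (m : ℕ) (j : Fin n) (v : (Fin n → Bool) → ℝ) :
    ∑ ε, coordNoise (2 * m : ℝ)⁻¹ j v ε ^ (2 * m) ≤ ∑ ε, (2⁻¹ * ∑ b, v (update ε j b) ^ 2) ^ m := by
  rw [sum_eq_inv_two_mul_sum_sum_update j (fun ε => coordNoise _ j v ε ^ (2 * m)),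
    sum_eq_inv_two_mul_sum_sum_update j (fun ε => (2⁻¹ * ∑ b, v (update ε j b) ^ 2) ^ m)]
  refine mul_le_mul_of_nonneg_left (sum_le_sum fun ε _ => ?_) (by norm_num)
  simp only [coordNoise, update_idem, update_self, Fintype.sum_bool, boolSign_true, boolSign_false]
  set x := v (update ε j true)
  set y := v (update ε j false)
  set σ : ℝ := (2 * m : ℝ)⁻¹
  calc (2⁻¹ * ((1 + σ * (1 * 1)) * x + (1 + σ * (1 * -1)) * y)) ^ (2 * m) +
        (2⁻¹ * ((1 + σ * (-1 * 1)) * x + (1 + σ * (-1 * -1)) * y)) ^ (2 * m)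
      = ((x + y) / 2 + σ * ((x - y) / 2)) ^ (2 * m) +
        ((x + y) / 2 - σ * ((x - y) / 2)) ^ (2 * m) := by congr 2 <;> ring
    _ ≤ 2 * (((x + y) / 2) ^ 2 + ((x - y) / 2) ^ 2) ^ m := two_point_inequality m _ _
    _ = (2⁻¹ * (x ^ 2 + y ^ 2)) ^ m + (2⁻¹ * (x ^ 2 + y ^ 2)) ^ m := by
        rw [← two_mul]; congr 2; ring

lemma sum_partialNoise_pow_le (m : ℕ) (s : Finset (Fin n)) (u : (Fin n → Bool) → ℝ) :
    ∑ ε, partialNoise (2 * m : ℝ)⁻¹ s u ε ^ (2 * m) ≤ ∑ ε, partialL2 s u ε ^ (2 * m) := by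
  induction s using Finset.induction_on generalizing u with
  | empty => simp only [partialNoise_empty, partialL2_empty, (even_two_mul m).pow_abs, le_refl]
  | insert j s hj ih =>
    calc ∑ ε, partialNoise (2 * m : ℝ)⁻¹ (insert j s) u ε ^ (2 * m)
        = ∑ ε, partialNoise (2 * m : ℝ)⁻¹ s (coordNoise (2 * m : ℝ)⁻¹ j u) ε ^ (2 * m) := by
          simp only [partialNoise_insert _ hj]
      _ ≤ ∑ ε, partialL2 s (coordNoise (2 * m : ℝ)⁻¹ j u) ε ^ (2 * m) := ih _
      _ ≤ ∑ ε, coordNoise (2 * m : ℝ)⁻¹ j (partialL2 s u) ε ^ (2 * m) := by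
          gcongr with ε
          · exact lpXnorm_nonneg _ _
          · exact partialL2_coordNoise_le (by positivity) (inv_two_mul_le_one m) hj u ε
      _ ≤ ∑ ε, (2⁻¹ * ∑ b, partialL2 s u (update ε j b) ^ 2) ^ m := sum_coordNoise_pow_le m j _
      _ = ∑ ε, partialL2 (insert j s) u ε ^ (2 * m) := by
          simp only [pow_mul, partialL2_insert_sq hj]

theorem lpXnorm_noise_le_real {m : ℕ} (hm : m ≠ 0) (u : (Fin n → Bool) → ℝ) :
    lpXnorm (2 * m : ℕ) (noise (2 * m : ℝ)⁻¹ u) ≤ lpXnorm 2 u := by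
  refine (pow_le_pow_iff_left₀ (lpXnorm_nonneg _ _) (lpXnorm_nonneg _ _)
    (mul_ne_zero two_ne_zero hm)).1 ?_
  rw [lpXnorm_natCast_pow (mul_ne_zero two_ne_zero hm)]
  calc (∑ ε, ‖noise (2 * m : ℝ)⁻¹ u ε‖ ^ (2 * m)) / 2 ^ n
      = (∑ ε, partialNoise (2 * m : ℝ)⁻¹ univ u ε ^ (2 * m)) / 2 ^ n := by
        simp only [partialNoise_univ, Real.norm_eq_abs, (even_two_mul m).pow_abs]
    _ ≤ (∑ ε, partialL2 univ u ε ^ (2 * m)) / 2 ^ n := by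
        gcongr ?_ / _; exact sum_partialNoise_pow_le m univ u
    _ = lpXnorm 2 u ^ (2 * m) := by
        simp only [partialL2_univ, sum_const, card_univ, card_cube, nsmul_eq_mul, Nat.cast_pow,
          Nat.cast_ofNat]
        field_simp

variable {X : Type*} [NormedAddCommGroup X] [NormedSpace ℝ X]

theorem lpXnorm_noise_le {m : ℕ} (hm : m ≠ 0) (f : (Fin n → Bool) → X) :
    lpXnorm (2 * m : ℕ) (noise (2 * m : ℝ)⁻¹ f) ≤ lpXnorm 2 f := by
  have hσ : |(2 * m : ℝ)⁻¹| ≤ 1 := by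
    rw [abs_of_nonneg (by positivity)]; exact inv_two_mul_le_one m
  calc lpXnorm (2 * m : ℕ) (noise (2 * m : ℝ)⁻¹ f)
      ≤ lpXnorm (2 * m : ℕ) (noise (2 * m : ℝ)⁻¹ fun δ => ‖f δ‖) :=
        lpXnorm_mono (by positivity) fun ε => (norm_noise_le hσ f ε).trans (Real.le_norm_self _)
    _ ≤ lpXnorm 2 fun δ => ‖f δ‖ := lpXnorm_noise_le_real hm _
    _ = lpXnorm 2 f := lpXnorm_norm 2 f

theorem lpXnorm_two_rademacher_le (f : (Fin n → Bool) → X) :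
    lpXnorm 2 (rademacher f) ≤ 16 * lpXnorm 1 (rademacher f) := by
  have l4_le : lpXnorm 4 (rademacher f) ≤ 4 * lpXnorm 2 (rademacher f) := by
    have hyper := lpXnorm_noise_le two_ne_zero (rademacher f)
    rw [noise_rademacher, lpXnorm_smul (by positivity), abs_of_pos (by positivity)] at hyper
    norm_num at hyper
    linarith
  set a := lpXnorm 1 (rademacher f)
  set b := lpXnorm 2 (rademacher f)
  have hb : b ^ 3 ≤ 16 * a * b ^ 2 := calc
    b ^ 3 ≤ a * lpXnorm 4 (rademacher f) ^ 2 := lpXnorm_two_pow_three_le _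
    _ ≤ a * (4 * b) ^ 2 := by gcongr; exacts [lpXnorm_nonneg 1 _, lpXnorm_nonneg 4 _]
    _ = 16 * a * b ^ 2 := by ring
  by_contra! h
  have hb0 : 0 < b := (mul_nonneg (by norm_num) (lpXnorm_nonneg 1 _)).trans_lt h
  nlinarith [pow_pos hb0 2]

end Hypercontractivity

section Transference

variable {n : ℕ} {X : Type*} [NormedAddCommGroup X] [NormedSpace ℝ X]

lemma sum_boolSign_smul_eq (j : Fin n) (F : (Fin n → Bool) → X) :
    ∑ δ, boolSign (δ j) • F δ = ((2 : ℝ) ^ n) • fourierX F {j} := by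
  simp only [fourierX, walsh_singleton,
    smul_inv_smul₀ (pow_ne_zero n two_ne_zero : (2 : ℝ) ^ n ≠ 0)]

lemma fourierX_dflipX_singleton (j : Fin n) (h : (Fin n → Bool) → X) :
    fourierX (dflipX j h) {j} = (2 : ℝ) • fourierX h {j} := by
  have flip_term : ∑ ε, boolSign (ε j) • h (update ε j (!ε j)) = -∑ ε, boolSign (ε j) • h ε := by
    rw [← sum_comp_flipCoord j, ← sum_neg_distrib]
    refine sum_congr rfl fun ε _ => ?_
    change boolSign (flipCoord j ε j) • h (flipCoord j (flipCoord j ε)) = _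
    rw [flipCoord_involutive j ε, flipCoord, update_self, boolSign_not, neg_smul]
  simp only [fourierX, walsh_singleton, dflipX, smul_sub, sum_sub_distrib, flip_term,
    sub_neg_eq_add, ← two_smul ℝ, smul_comm (2 : ℝ)]

lemma sum_boolSign_smul_cubeMul (j : Fin n) (η : Fin n → Bool) (F : (Fin n → Bool) → X) :
    ∑ δ, boolSign (δ j) • F (cubeMul δ η) = boolSign (η j) • ∑ δ, boolSign (δ j) • F δ := by
  rw [← sum_comp_cubeMul η, smul_sum]
  refine sum_congr rfl fun δ _ => ?_
  rw [cubeMul_cubeMul_right, cubeMul, boolSign_beq, smul_smul, mul_comm]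

lemma average_sum_dflipX_cubeMul (h : (Fin n → Bool) → X) (η : Fin n → Bool) :
    ((2 : ℝ) ^ n)⁻¹ • ∑ δ, ∑ j, boolSign (δ j) • dflipX j h (cubeMul δ η) =
      (2 : ℝ) • rademacher h η := by
  rw [sum_comm]
  simp only [sum_boolSign_smul_cubeMul, sum_boolSign_smul_eq, fourierX_dflipX_singleton,
    rademacher, smul_sum]
  refine sum_congr rfl fun j _ => ?_
  rw [smul_comm _ (boolSign (η j)), inv_smul_smul₀ (pow_ne_zero n two_ne_zero), smul_comm]

theorem lpXnorm_two_smul_rademacher_rpow_le {p : ℝ} (hp : 1 ≤ p) (h : (Fin n → Bool) → X) :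
    lpXnorm p ((2 : ℝ) • rademacher h) ^ p ≤
      (∑ δ : Fin n → Bool, lpXnorm p (fun ε => ∑ j, boolSign (δ j) • dflipX j h ε) ^ p) /
        2 ^ n := by
  set G : (Fin n → Bool) → (Fin n → Bool) → X := fun δ ε => ∑ j, boolSign (δ j) • dflipX j h ε
  simp only [lpXnorm_rpow (zero_lt_one.trans_le hp)]
  gcongr ?_ / _
  calc ∑ η, ‖((2 : ℝ) • rademacher h) η‖ ^ p
      = ∑ η, ‖((2 : ℝ) ^ n)⁻¹ • ∑ δ, G δ (cubeMul δ η)‖ ^ p := by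
        simp only [G, average_sum_dflipX_cubeMul, Pi.smul_apply]
    _ ≤ ∑ η, ((2 : ℝ) ^ n)⁻¹ * ∑ δ, ‖G δ (cubeMul δ η)‖ ^ p :=
        sum_le_sum fun η _ => norm_average_rpow_le hp _
    _ = ∑ δ, (∑ ε, ‖G δ ε‖ ^ p) / 2 ^ n := by
        simp only [← mul_sum, div_eq_inv_mul]
        rw [sum_comm]
        congr 1
        refine sum_congr rfl fun δ _ => ?_
        simp only [cubeMul_comm δ]
        exact sum_comp_cubeMul δ fun ε => ‖G δ ε‖ ^ p

end Transference

section KConvexity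

variable {n : ℕ} {X : Type*} [NormedAddCommGroup X] [NormedSpace ℝ X]

lemma deltaPowX_deltaPowX_neg_noise (α ρ : ℝ) (f : (Fin n → Bool) → X) (ε : Fin n → Bool) :
    deltaPowX α (deltaPowX (-α) (noise ρ f)) ε = noise ρ f ε - fourierX f ∅ := by
  simp only [deltaPowX_eq_fourierMultiplier, noise_eq_fourierMultiplier,
    fourierMultiplier_fourierMultiplier]
  rw [fourierMultiplier, fourierMultiplier,
    ← Fintype.sum_ite_eq' (∅ : Finset (Fin n)) fun _ => fourierX f ∅, ← sum_sub_distrib]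
  refine sum_congr rfl fun A _ => ?_
  rcases A.eq_empty_or_nonempty with rfl | hA
  · simp [walsh_empty]
  · have hcard : (0 : ℝ) < A.card := Nat.cast_pos.2 hA.card_pos
    simp [hA, hA.ne_empty, ← mul_assoc, ← Real.rpow_add hcard]

lemma rademacher_deltaPowX_neg_noise (α ρ : ℝ) (f : (Fin n → Bool) → X) :
    rademacher (deltaPowX (-α) (noise ρ f)) = ρ • rademacher f := by
  simp only [rademacher_eq_fourierMultiplier, deltaPowX_eq_fourierMultiplier,
    noise_eq_fourierMultiplier, fourierMultiplier_fourierMultiplier, ← fourierMultiplier_const_mul]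
  congr 1
  funext A
  by_cases h : A.card = 1
  · simp [h, card_pos.1 (h ▸ one_pos)]
  · simp [h]

lemma lpXnorm_deltaPowX_deltaPowX_neg_noise_le {p : ℝ} (hp : 1 ≤ p) (α : ℝ) {m : ℕ}
    (hm : m ≠ 0) (hpm : p ≤ 2 * m) (f : (Fin n → Bool) → X) :
    lpXnorm p (deltaPowX α (deltaPowX (-α) (noise (2 * m : ℝ)⁻¹ f))) ≤ 2 * lpXnorm 2 f := by
  have hp0 : 0 < p := zero_lt_one.trans_le hp
  have split : deltaPowX α (deltaPowX (-α) (noise (2 * m : ℝ)⁻¹ f)) =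
      noise (2 * m : ℝ)⁻¹ f + fun _ => -fourierX f ∅ := by
    funext ε
    rw [deltaPowX_deltaPowX_neg_noise, sub_eq_add_neg, Pi.add_apply]
  calc lpXnorm p (deltaPowX α (deltaPowX (-α) (noise (2 * m : ℝ)⁻¹ f)))
      ≤ lpXnorm p (noise (2 * m : ℝ)⁻¹ f) + ‖fourierX f ∅‖ := by
        rw [split, ← norm_neg (fourierX f ∅), ← lpXnorm_const hp0]
        exact lpXnorm_add_le hp _ _
    _ ≤ lpXnorm (2 * m : ℕ) (noise (2 * m : ℝ)⁻¹ f) + lpXnorm 1 f := by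
        gcongr
        · exact lpXnorm_le_lpXnorm hp0 (by exact_mod_cast hpm) _
        · exact norm_fourierX_empty_le f
    _ ≤ lpXnorm 2 f + lpXnorm 2 f := by
        gcongr
        · exact lpXnorm_noise_le hm f
        · exact lpXnorm_le_lpXnorm one_pos one_le_two f
    _ = 2 * lpXnorm 2 f := by ring

theorem lpXnorm_rademacher_le_of_riesz {p α K : ℝ} (hp : 1 ≤ p) (hK : 0 ≤ K) {m : ℕ}
    (hm : m ≠ 0) (hpm : p ≤ 2 * m) (f : (Fin n → Bool) → X)
    (hRiesz : (∑ δ : Fin n → Bool, lpXnorm p (fun ε => ∑ j, boolSign (δ j) •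
        dflipX j (deltaPowX (-α) (noise (2 * m : ℝ)⁻¹ f)) ε) ^ p) / 2 ^ n ≤
      K ^ p * lpXnorm p (deltaPowX α (deltaPowX (-α) (noise (2 * m : ℝ)⁻¹ f))) ^ p) :
    lpXnorm p (rademacher f) ≤ 2 * m * K * lpXnorm 2 f := by
  set g := deltaPowX (-α) (noise (2 * m : ℝ)⁻¹ f)
  have hp0 : 0 < p := zero_lt_one.trans_le hp
  have hm0 : (0 : ℝ) < m := Nat.cast_pos.2 (Nat.pos_of_ne_zero hm)
  have transference : lpXnorm p ((2 : ℝ) • rademacher g) ≤ K * lpXnorm p (deltaPowX α g) := by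
    refine lpXnorm_le_of_rpow_le hp0 (mul_nonneg hK (lpXnorm_nonneg _ _)) ?_
    rw [Real.mul_rpow hK (lpXnorm_nonneg _ _)]
    exact (lpXnorm_two_smul_rademacher_rpow_le hp _).trans hRiesz
  have lhs : lpXnorm p ((2 : ℝ) • rademacher g) = (m : ℝ)⁻¹ * lpXnorm p (rademacher f) := by
    rw [rademacher_deltaPowX_neg_noise, smul_smul, lpXnorm_smul hp0, abs_of_pos (by positivity)]
    field_simp
  have key : (m : ℝ)⁻¹ * lpXnorm p (rademacher f) ≤ K * (2 * lpXnorm 2 f) :=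
    lhs ▸ transference.trans
      (mul_le_mul_of_nonneg_left (lpXnorm_deltaPowX_deltaPowX_neg_noise_le hp α hm hpm f) hK)
  calc lpXnorm p (rademacher f) = m * ((m : ℝ)⁻¹ * lpXnorm p (rademacher f)) := by field_simp
    _ ≤ m * (K * (2 * lpXnorm 2 f)) := by gcongr
    _ = 2 * m * K * lpXnorm 2 f := by ring

end KConvexity

theorem one_sided_riesz_implies_K_convex_general (p : ℝ) (hp : 1 ≤ p) (α : ℝ)
    {X : Type*} [NormedAddCommGroup X] [NormedSpace ℝ X]
    (K : ℝ) (hK : 0 < K)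
    (hRiesz : ∀ n : ℕ, ∀ h : (Fin n → Bool) → X,
      (∑ δ : Fin n → Bool, lpXnorm p
          (fun ε => ∑ j : Fin n, (if δ j then (1 : ℝ) else -1) • dflipX j h ε) ^ p) /
        2 ^ n ≤
      K ^ p * lpXnorm p (deltaPowX α h) ^ p) :
    ∃ K' : ℝ, 0 < K' ∧ ∀ n : ℕ, ∀ h : (Fin n → Bool) → X,
      lpXnorm 2 (fun ε => ∑ j : Fin n, (if ε j then (1 : ℝ) else -1) • fourierX h {j}) ≤
        K' * lpXnorm 2 h := by
  set m := ⌈p⌉₊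
  have hm : 0 < m := Nat.ceil_pos.2 (zero_lt_one.trans_le hp)
  have hpm : p ≤ 2 * m := by
    have : p ≤ m := Nat.le_ceil p
    linarith [(Nat.cast_nonneg m : (0 : ℝ) ≤ m)]
  refine ⟨32 * m * K, by positivity, fun n f => ?_⟩
  calc lpXnorm 2 (rademacher f) ≤ 16 * lpXnorm 1 (rademacher f) := lpXnorm_two_rademacher_le f
    _ ≤ 16 * lpXnorm p (rademacher f) := by gcongr; exact lpXnorm_le_lpXnorm one_pos hp _
    _ ≤ 16 * (2 * m * K * lpXnorm 2 f) := by
        gcongr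
        exact lpXnorm_rademacher_le_of_riesz hp hK.le hm.ne' hpm f (hRiesz n _)
    _ = 32 * m * K * lpXnorm 2 f := by ring

/-- **Corollary 4.3**: let `p ∈ [1,∞)`, `α ∈ (0,1)`, and let `X` be a Banach space
satisfying the one-sided vector-valued Riesz transform inequality
`2^{-n} Σ_δ ‖Σ_j δ_j (∂_j ⊗ I_X) h‖_{L_p(X)}^p ≤ K^p ‖(Δ_{[n]}^α ⊗ I_X) h‖_{L_p(X)}^p`.
Then `X` is `K`-convex: the vector-valued Rademacher projections
`(Rad ⊗ I_X) h (ε) = Σ_j ε_j ĥ({j})` are bounded on `L_2({-1,1}^n; X)` uniformly in `n`. -/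
theorem one_sided_riesz_implies_K_convex (p : ℝ) (hp : 1 ≤ p) (α : ℝ) (hα0 : 0 < α)
    (hα1 : α < 1)
    {X : Type*} [NormedAddCommGroup X] [NormedSpace ℝ X] [CompleteSpace X]
    (K : ℝ) (hK : 0 < K)
    (hRiesz : ∀ n : ℕ, ∀ h : (Fin n → Bool) → X,
      (∑ δ : Fin n → Bool, lpXnorm p
          (fun ε => ∑ j : Fin n, (if δ j then (1 : ℝ) else -1) • dflipX j h ε) ^ p) /
        2 ^ n ≤
      K ^ p * lpXnorm p (deltaPowX α h) ^ p) :
    ∃ K' : ℝ, 0 < K' ∧ ∀ n : ℕ, ∀ h : (Fin n → Bool) → X,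
      lpXnorm 2 (fun ε => ∑ j : Fin n, (if ε j then (1 : ℝ) else -1) • fourierX h {j}) ≤
        K' * lpXnorm 2 h :=
  one_sided_riesz_implies_K_convex_general p hp α K hK hRiesz
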